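/- arXiv:1705.04648 — 3 statements merged into one kernel-verified Lean document; each statement's English description precedes it below -/
import Mathlib

section
/- For b ≤ -2, every fixed point of S_{2,b} is at most (|b|-1)(|b|^2 - |b| + 1), and every cycle of S_{2,b} contains a number at most (|b|-1)(|b|^2 - |b| + 1). -/
/-- The value of a digit list `L = [a₀, a₁, …, aₙ]` in base `b`: `Σ aᵢ bⁱ`. -/
def baseVal (b : ℤ) : List ℤ → ℤ
  | [] => 0
  | d :: L => d + b * baseVal b L

/-- `L` is the base-`b` digit expansion of `a`: digits in `[0, |b|-1]`,
leading (last) digit nonzero, with value `a`. -/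
def IsDigitExpansion (b a : ℤ) (L : List ℤ) : Prop :=
  (∀ d ∈ L, 0 ≤ d ∧ d ≤ |b| - 1) ∧ L ≠ [] ∧ L.getLast! ≠ 0 ∧ baseVal b L = a

/-- `S` is the function `S_{e,b}` sending `a` to the sum of `e`-th powers of its
base-`b` digits (and `0` to `0`). -/
def IsPowSumFun (e : ℕ) (b : ℤ) (S : ℤ → ℤ) : Prop :=
  S 0 = 0 ∧ ∀ a L, IsDigitExpansion b a L → S a = (L.map (· ^ e)).sum

/-!
Write `m = |b|`. A positive integer with `n` digits in base `-m` has `n` odd and satisfies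
`(m + 1) a ≥ m ^ (n - 1) + m`, while the sum of the squares of its digits is at most `n (m - 1) ^ 2`.
For `n ≥ 5` this forces `S a < a`; for `n ≤ 3` we have `S a ≤ 3 (m - 1) ^ 2 ≤ (m - 1) (m ^ 2 - m + 1)`.
So `S` strictly decreases above `(m - 1) (m ^ 2 - m + 1)`, and neither a fixed point nor a whole
cycle can lie above that bound.
-/

theorem Function.exists_iterate_le_of_iterate_eq {α : Type*} [LinearOrder α] {f : α → α}
    {B : α} (hf : ∀ x, B < x → f x < x) {a : α} {n : ℕ} (hn : n ≠ 0) (ha : f^[n] a = a) :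
    ∃ j, f^[j] a ≤ B := by
  by_contra! h
  have hanti : StrictAnti (f^[·] a) := strictAnti_nat_of_succ_lt fun k => by
    rw [Function.iterate_succ_apply']
    exact hf _ (h k)
  simpa [ha] using hanti (Nat.pos_of_ne_zero hn)

theorem List.getLast!_cons_of_ne_nil {α : Type*} [Inhabited α] (d : α) {L : List α}
    (h : L ≠ []) : (d :: L).getLast! = L.getLast! := by
  cases L <;> simp_all

theorem exists_isDigitExpansion {b : ℤ} (hb : b ≤ -2) {a : ℤ} (ha : a ≠ 0) :
    ∃ L, IsDigitExpansion b a L := by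
  have hdiv := Int.mul_ediv_add_emod a b
  have hr₀ : 0 ≤ a % b := Int.emod_nonneg a (by omega)
  have hr₁ : a % b < |b| := Int.emod_lt_abs a (by omega)
  have hbabs : |b| = -b := abs_of_neg (by omega)
  by_cases hq : a / b = 0
  · rw [hq] at hdiv
    refine ⟨[a % b], ?_, List.cons_ne_nil _ _, ?_, ?_⟩
    · simp only [List.mem_singleton, forall_eq]; omega
    · simp only [List.getLast!, List.getLast_singleton]; omega
    · simp only [baseVal]; omega
  · obtain ⟨L, hdig, hne, hlast, hval⟩ := exists_isDigitExpansion hb hq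
    refine ⟨a % b :: L, ?_, List.cons_ne_nil _ _, ?_, ?_⟩
    · simp only [List.mem_cons, forall_eq_or_imp]
      exact ⟨⟨hr₀, by omega⟩, hdig⟩
    · rwa [List.getLast!_cons_of_ne_nil _ hne]
    · simp only [baseVal, hval]; linarith
-- `a ↦ a / b` decreases `|a|` except at `-1 ↦ 1`, hence the tie-break on the sign.
termination_by 2 * a.natAbs + if a < 0 then 1 else 0
decreasing_by
  have hneg : a / b ≤ -1 → -2 * (a / b) ≤ a := fun h => by nlinarith
  have hpos : 1 ≤ a / b → a ≤ -(a / b) := fun h => by nlinarith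
  split_ifs <;> omega

theorem IsDigitExpansion.bounds_of_neg_base {m a : ℤ} {L : List ℤ} (hm : 0 ≤ m)
    (h : IsDigitExpansion (-m) a L) :
    (Odd L.length → m ^ (L.length - 1) + m ≤ (m + 1) * a) ∧
      (Even L.length → (m + 1) * a ≤ -(m ^ (L.length - 1) + 1)) := by
  induction L generalizing a with
  | nil => exact absurd rfl h.2.1
  | cons d t ih =>
    obtain ⟨hdig, -, hlast, hval⟩ := h
    have hd := hdig d List.mem_cons_self
    rw [abs_neg, abs_of_nonneg hm] at hd
    simp only [baseVal] at hval
    subst hval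
    rcases eq_or_ne t [] with rfl | ht
    · have hd₀ : d ≠ 0 := by simpa [List.getLast!] using hlast
      simp only [List.length_singleton, Nat.sub_self, pow_zero, baseVal, Nat.odd_iff,
        Nat.even_iff]
      refine ⟨fun _ => ?_, by omega⟩
      nlinarith [show 1 ≤ d by omega]
    · obtain ⟨iht_odd, iht_even⟩ := ih ⟨fun x hx => hdig x (List.mem_cons_of_mem d hx), ht,
        by rwa [List.getLast!_cons_of_ne_nil _ ht] at hlast, rfl⟩
      have hlen : (d :: t).length - 1 = (t.length - 1) + 1 := by
        have := List.length_pos_iff.mpr ht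
        simp only [List.length_cons]; omega
      rw [hlen, pow_succ, List.length_cons, Nat.odd_add_one, Nat.even_add_one,
        Nat.not_odd_iff_even, Nat.not_even_iff_odd]
      exact ⟨fun he => by nlinarith [mul_le_mul_of_nonneg_left (iht_even he) hm],
        fun ho => by nlinarith [mul_le_mul_of_nonneg_left (iht_odd ho) hm]⟩

theorem IsDigitExpansion.odd_length_of_pos {m a : ℤ} {L : List ℤ} (hm : 0 ≤ m)
    (h : IsDigitExpansion (-m) a L) (ha : 0 < a) : Odd L.length := by
  by_contra hodd
  have := (h.bounds_of_neg_base hm).2 (Nat.not_odd_iff_even.mp hodd)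
  have : 0 ≤ m ^ (L.length - 1) := pow_nonneg hm _
  nlinarith

theorem List.sum_map_sq_le_length_mul {R : Type*} [Semiring R] [LinearOrder R] [IsOrderedRing R]
    {m : R} {L : List R} (h : ∀ d ∈ L, 0 ≤ d ∧ d ≤ m) :
    (L.map (· ^ 2)).sum ≤ L.length * m ^ 2 := by
  simpa using List.sum_le_card_nsmul (L.map (· ^ 2)) (m ^ 2) (by
    simp only [List.mem_map, forall_exists_index, and_imp, forall_apply_eq_imp_iff₂]
    exact fun d hd => pow_le_pow_left₀ (h d hd).1 (h d hd).2 2)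

theorem length_mul_sq_lt_pow {m : ℤ} (hm : 2 ≤ m) {n : ℕ} (hn : 5 ≤ n) :
    n * (m - 1) ^ 2 * (m + 1) < m ^ (n - 1) := by
  induction n, hn using Nat.le_induction with
  | base =>
    -- `m ^ 4 - 5 (m - 1) ^ 2 (m + 1) = (m - 2) (m - 3) (m ^ 2 - 1) + 1`
    have h₂₃ : 0 ≤ (m - 2) * (m - 3) := by
      rcases eq_or_lt_of_le hm with rfl | h3
      · norm_num
      · exact mul_nonneg (by linarith) (by linarith)
    norm_num
    nlinarith [mul_nonneg h₂₃ (by nlinarith : (0 : ℤ) ≤ m ^ 2 - 1)]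
  | succ n hn ih =>
    have hX : 0 ≤ (m - 1) ^ 2 * (m + 1) := by positivity
    rw [show n + 1 - 1 = n - 1 + 1 by omega, pow_succ m (n - 1)]
    push_cast
    nlinarith [mul_le_mul_of_nonneg_left hm (pow_nonneg (by linarith : (0 : ℤ) ≤ m) (n - 1))]

theorem IsDigitExpansion.sum_sq_lt_self {m a : ℤ} {L : List ℤ} (hm : 2 ≤ m)
    (h : IsDigitExpansion (-m) a L) (ha : (m - 1) * (m ^ 2 - m + 1) < a) :
    (L.map (· ^ 2)).sum < a := by
  have hdig : ∀ d ∈ L, 0 ≤ d ∧ d ≤ m - 1 := by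
    simpa only [abs_neg, abs_of_nonneg (by omega : 0 ≤ m)] using h.1
  have hsum := List.sum_map_sq_le_length_mul hdig
  have hodd := h.odd_length_of_pos (by omega) (by nlinarith)
  have hval := (h.bounds_of_neg_base (by omega)).1 hodd
  obtain ⟨k, hk⟩ := hodd
  rcases le_or_gt k 1 with hk1 | hk2
  · have hlen : (L.length : ℤ) ≤ 3 := by omega
    nlinarith [sq_nonneg (m - 2)]
  · have hgap := length_mul_sq_lt_pow hm (by omega : 5 ≤ L.length)
    nlinarith

theorem IsPowSumFun.apply_lt_self {b : ℤ} (hb : b ≤ -2) {S : ℤ → ℤ} (hS : IsPowSumFun 2 b S)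
    {a : ℤ} (ha : (|b| - 1) * (|b| ^ 2 - |b| + 1) < a) : S a < a := by
  have hb' : b = -|b| := by rw [abs_of_neg (by omega)]; ring
  have ha₀ : 0 < a := by nlinarith [abs_nonneg b]
  obtain ⟨L, hL⟩ := exists_isDigitExpansion hb ha₀.ne'
  rw [hS.2 a L hL]
  rw [hb'] at hL
  exact hL.sum_sq_lt_self (by rw [abs_of_neg (by omega)]; omega) ha

theorem fixed_points_and_cycles_bounded (b : ℤ) (hb : b ≤ -2)
    (S : ℤ → ℤ) (hS : IsPowSumFun 2 b S) (a : ℤ) :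
    (S a = a → a ≤ (|b| - 1) * (|b| ^ 2 - |b| + 1)) ∧
      (∀ m : ℕ, 1 ≤ m → S^[m] a = a →
        ∃ j : ℕ, S^[j] a ≤ (|b| - 1) * (|b| ^ 2 - |b| + 1)) := by
  have hdec : ∀ x, (|b| - 1) * (|b| ^ 2 - |b| + 1) < x → S x < x :=
    fun x hx => hS.apply_lt_self hb hx
  exact ⟨fun hfix => le_of_not_gt fun h => (hdec a h).ne hfix,
    fun m hm hcyc => Function.exists_iterate_le_of_iterate_eq hdec (by omega) hcyc⟩
end

section
/- The positive fixed points of S_{2,-5} are exactly 1, 10, and 11. -/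
theorem baseVal_append_singleton (b : ℤ) (M : List ℤ) (d : ℤ) :
    baseVal b (M ++ [d]) = baseVal b M + d * b ^ M.length := by
  induction M with
  | nil => simp [baseVal]
  | cons x M ih => simp only [List.cons_append, baseVal, ih, List.length_cons]; ring

theorem baseVal_neg_bounds {b : ℤ} (hb : 1 ≤ b) {M : List ℤ}
    (hM : ∀ x ∈ M, 0 ≤ x ∧ x ≤ b - 1) :
    b - b ^ (M.length + 1) ≤ (b + 1) * baseVal (-b) M ∧
      (b + 1) * baseVal (-b) M ≤ b ^ (M.length + 1) - 1 := by
  induction M with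
  | nil => simpa [baseVal] using hb
  | cons x M ih =>
    obtain ⟨hx0, hx⟩ := hM x List.mem_cons_self
    obtain ⟨hlo, hhi⟩ := ih fun y hy => hM y (List.mem_cons_of_mem x hy)
    simp only [baseVal, List.length_cons, pow_succ _ (M.length + 1)]
    constructor <;> nlinarith

theorem sum_map_sq_le {c : ℤ} {L : List ℤ} (hL : ∀ x ∈ L, 0 ≤ x ∧ x ≤ c) :
    (L.map (· ^ 2)).sum ≤ L.length * c ^ 2 := by
  simpa using List.sum_le_card_nsmul (L.map (· ^ 2)) (c ^ 2) (by
    simp only [List.mem_map, forall_exists_index, and_imp, forall_apply_eq_imp_iff₂]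
    intro x hx
    obtain ⟨h0, h1⟩ := hL x hx
    exact pow_le_pow_left₀ h0 h1 2)

theorem IsDigitExpansion.cons {b a r : ℤ} {L : List ℤ} (h : IsDigitExpansion b a L)
    (hr0 : 0 ≤ r) (hr : r ≤ |b| - 1) : IsDigitExpansion b (r + b * a) (r :: L) := by
  obtain ⟨hdig, hne, hlast, hval⟩ := h
  obtain ⟨M, d, rfl⟩ := (List.eq_nil_or_concat' _).resolve_left hne
  refine ⟨?_, List.cons_ne_nil r _, by simpa [List.getLast?_cons] using hlast,
    by rw [baseVal, hval]⟩
  rintro x (_ | ⟨_, hx⟩)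
  exacts [⟨hr0, hr⟩, hdig x hx]

theorem isDigitExpansion_singleton {b r : ℤ} (hr0 : 0 < r) (hr : r ≤ |b| - 1) :
    IsDigitExpansion b r [r] :=
  ⟨by simpa using ⟨hr0.le, by omega⟩, List.cons_ne_nil r [], by simpa using hr0.ne',
    by simp [baseVal]⟩

theorem exists_isDigitExpansion_neg {b : ℤ} (hb : 2 ≤ b) {a : ℤ} (ha : a ≠ 0) :
    ∃ L, IsDigitExpansion (-b) a L := by
  -- `|a|` need not decrease along `a ↦ -(a / b)` (e.g. `-1 ↦ 1`), but `|4a - 1|` does.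
  induction h : (4 * a - 1).natAbs using Nat.strong_induction_on generalizing a with
  | _ n ih =>
    subst h
    have habs : |-b| - 1 = b - 1 := by rw [abs_neg, abs_of_pos (by omega)]
    have hr0 := Int.emod_nonneg a (by omega : b ≠ 0)
    have hrb := Int.emod_lt_of_pos a (by omega : 0 < b)
    have hdiv := Int.emod_add_mul_ediv a b
    by_cases hq : a / b = 0
    · rw [hq, mul_zero, add_zero] at hdiv
      exact ⟨[a], isDigitExpansion_singleton (by omega) (by rw [habs]; omega)⟩
    have hlt : (4 * -(a / b) - 1).natAbs < (4 * a - 1).natAbs := by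
      rcases lt_or_gt_of_ne ha with ha | ha
      · have hq_ge : a ≤ a / b := by nlinarith
        have hq_neg : a / b < 0 := by nlinarith
        omega
      · have hq_nonneg : 0 ≤ a / b := by nlinarith
        have hq_le : 2 * (a / b) ≤ a := by nlinarith
        omega
    obtain ⟨L, hL⟩ := ih _ hlt (neg_ne_zero.mpr hq) rfl
    refine ⟨a % b :: L, ?_⟩
    convert hL.cons hr0 (by rw [habs]; omega) using 1
    linarith

theorem IsDigitExpansion.even_and_pow_add_le {b a : ℤ} {L : List ℤ}
    (h : IsDigitExpansion (-b) a L) (hb : 1 ≤ b) (ha : 0 < a) :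
    Even (L.length - 1) ∧ b ^ (L.length - 1) + b ≤ (b + 1) * a := by
  obtain ⟨hdig, hne, hlast, rfl⟩ := h
  obtain ⟨M, d, rfl⟩ := (List.eq_nil_or_concat' L).resolve_left hne
  have habs : |-b| - 1 = b - 1 := by rw [abs_neg, abs_of_pos (by omega)]
  rw [habs] at hdig
  have hd : 0 < d := (hdig d (by simp)).1.lt_of_ne' (by simpa using hlast)
  obtain ⟨hlo, hhi⟩ := baseVal_neg_bounds hb fun x hx => hdig x (List.mem_append_left _ hx)
  simp only [List.length_append, List.length_singleton, Nat.add_sub_cancel]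
  rw [baseVal_append_singleton] at ha ⊢
  have hpow : 0 < b ^ M.length := by positivity
  rw [pow_succ] at hlo hhi
  rcases Nat.even_or_odd M.length with heven | hodd
  · rw [heven.neg_pow] at ha ⊢
    exact ⟨heven, by nlinarith⟩
  · rw [hodd.neg_pow] at ha
    nlinarith

theorem mul_succ_lt_five_pow_add {n : ℕ} (hn : 4 ≤ n) : 96 * ((n : ℤ) + 1) < 5 ^ n + 5 := by
  induction n, hn using Nat.le_induction with
  | base => norm_num
  | succ n _ ih =>
    push_cast
    rw [pow_succ]
    nlinarith [pow_pos (by norm_num : (0 : ℤ) < 5) n]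

theorem IsDigitExpansion.length_eq_one_or_three {a : ℤ} {L : List ℤ}
    (h : IsDigitExpansion (-5) a L) (ha : 0 < a) (hsum : a ≤ (L.map (· ^ 2)).sum) :
    L.length = 1 ∨ L.length = 3 := by
  obtain ⟨heven, hlow⟩ := h.even_and_pow_add_le (by norm_num) ha
  have hsq := sum_map_sq_le (c := 4) (by simpa using h.1)
  have hne : L.length ≠ 0 := (List.length_pos_iff.mpr h.2.1).ne'
  have hlen : L.length - 1 < 4 := by
    by_contra! hn
    have hgrowth := mul_succ_lt_five_pow_add hn
    push_cast [Nat.cast_sub (Nat.one_le_iff_ne_zero.mpr hne)] at *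
    nlinarith
  rw [Nat.even_iff] at heven
  omega

theorem IsDigitExpansion.eq_of_sum_sq_eq {a : ℤ} {L : List ℤ} (h : IsDigitExpansion (-5) a L)
    (ha : 0 < a) (hfix : (L.map (· ^ 2)).sum = a) : a = 1 ∨ a = 10 ∨ a = 11 := by
  have hlen := h.length_eq_one_or_three ha hfix.ge
  obtain ⟨hdig, -, hlast, rfl⟩ := h
  have hdig : ∀ d ∈ L, 0 ≤ d ∧ d ≤ 4 := by simpa using hdig
  rcases hlen with hL | hL
  · obtain ⟨d, rfl⟩ := List.length_eq_one_iff.mp hL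
    have hd : 0 < d := (hdig d (by simp)).1.lt_of_ne' (by simpa using hlast)
    have hd' : d ≤ 4 := (hdig d (by simp)).2
    interval_cases d <;> revert hfix <;> decide
  · obtain ⟨d₀, d₁, d₂, rfl⟩ := List.length_eq_three.mp hL
    obtain ⟨h₀, h₀'⟩ := hdig d₀ (by simp)
    obtain ⟨h₁, h₁'⟩ := hdig d₁ (by simp)
    have h₂ : 0 < d₂ := (hdig d₂ (by simp)).1.lt_of_ne' (by simpa using hlast)
    have h₂' : d₂ ≤ 4 := (hdig d₂ (by simp)).2
    interval_cases d₀ <;> interval_cases d₁ <;> interval_cases d₂ <;> revert hfix <;> decide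

theorem fixed_points_base_neg_five (S : ℤ → ℤ) (hS : IsPowSumFun 2 (-5) S) :
    ∀ a : ℤ, 0 < a → (S a = a ↔ a = 1 ∨ a = 10 ∨ a = 11) := by
  intro a ha
  constructor
  · intro hfix
    obtain ⟨L, hL⟩ := exists_isDigitExpansion_neg (by norm_num : (2 : ℤ) ≤ 5) ha.ne'
    exact hL.eq_of_sum_sq_eq ha ((hS.2 a L hL).symm.trans hfix)
  · rintro (rfl | rfl | rfl)
    exacts [hS.2 1 [1] (by unfold IsDigitExpansion; decide),
      hS.2 10 [0, 3, 1] (by unfold IsDigitExpansion; decide),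
      hS.2 11 [1, 3, 1] (by unfold IsDigitExpansion; decide)]
end

section
/- There exists an infinite arithmetic progression with common difference 3 consisting entirely of −2-happy numbers; in particular, the set {a ∈ ℤ^+ : a ≡ 1 (mod 3)} consists entirely of −2-happy numbers. -/
/-!
For `a ≠ 0` the base `-2` digits of `a` are `0` and `1`, so `S a` is their plain sum `s a`.
As `-2 ≡ 1 [ZMOD 3]`, `s a ≡ a [ZMOD 3]`; moreover `s a ≥ 0`, and peeling off one digit
from the bound `s a ≤ max a (1 - a)` gives `s a < a` for `a ≥ 4`. So `S` maps
`{a > 0 | a ≡ 1 [ZMOD 3]}` into itself and strictly decreases on it away from the fixed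
point `1`; every orbit in it therefore reaches `1`, and `1, 4, 7, …` is the progression.
-/

theorem baseVal_modEq_sum {b m : ℤ} (hb : b ≡ 1 [ZMOD m]) (L : List ℤ) :
    baseVal b L ≡ L.sum [ZMOD m] := by
  induction L with
  | nil => rfl
  | cons d L ih =>
    simpa only [baseVal, List.sum_cons, one_mul] using (hb.mul ih).add_left d

theorem List.sum_map_pow_of_mem_zero_one {e : ℕ} (he : e ≠ 0) {L : List ℤ}
    (hL : ∀ d ∈ L, d = 0 ∨ d = 1) : (L.map (· ^ e)).sum = L.sum := by
  rw [List.map_congr_left (g := id), List.map_id]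
  intro d hd
  rcases hL d hd with rfl | rfl <;> simp [he]

/-- The base `-2` digits of `a`, least significant first. -/
def negTwoDigits (a : ℤ) : List ℤ :=
  if a = 0 then [] else (a % 2) :: negTwoDigits (-(a / 2))
-- `|-(a / 2)| = |a|` only for `a = -1`, which is sent to `1`.
termination_by a.natAbs * 2 + (if a < 0 then 1 else 0)
decreasing_by split_ifs <;> omega

theorem negTwoDigits_zero : negTwoDigits 0 = [] := by
  rw [negTwoDigits, if_pos rfl]

theorem negTwoDigits_of_ne_zero {a : ℤ} (h : a ≠ 0) :
    negTwoDigits a = (a % 2) :: negTwoDigits (-(a / 2)) := by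
  rw [negTwoDigits, if_neg h]

theorem mem_negTwoDigits {a d : ℤ} (hd : d ∈ negTwoDigits a) : d = 0 ∨ d = 1 := by
  induction a using negTwoDigits.induct with
  | case1 => simp [negTwoDigits_zero] at hd
  | case2 a h ih =>
    rw [negTwoDigits_of_ne_zero h, List.mem_cons] at hd
    rcases hd with rfl | hd
    · omega
    · exact ih hd

theorem baseVal_negTwoDigits (a : ℤ) : baseVal (-2) (negTwoDigits a) = a := by
  induction a using negTwoDigits.induct with
  | case1 => rw [negTwoDigits_zero, baseVal]
  | case2 a h ih => rw [negTwoDigits_of_ne_zero h, baseVal, ih]; omega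

theorem getLast?_negTwoDigits {a : ℤ} (h : a ≠ 0) : (negTwoDigits a).getLast? = some 1 := by
  induction a using negTwoDigits.induct with
  | case1 => exact absurd rfl h
  | case2 a h ih =>
    rw [negTwoDigits_of_ne_zero h, List.getLast?_cons]
    rcases eq_or_ne (-(a / 2)) 0 with h0 | h0
    · rw [h0, negTwoDigits_zero, List.getLast?_nil, Option.getD_none]
      congr 1
      omega
    · rw [ih h0, Option.getD_some]

theorem isDigitExpansion_negTwoDigits {a : ℤ} (h : a ≠ 0) :
    IsDigitExpansion (-2) a (negTwoDigits a) := by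
  refine ⟨fun d hd => ?_, by simp [negTwoDigits_of_ne_zero h], ?_, baseVal_negTwoDigits a⟩
  · rcases mem_negTwoDigits hd with rfl | rfl <;> norm_num
  · simp [getLast?_negTwoDigits h]

theorem sum_negTwoDigits_modEq (a : ℤ) : (negTwoDigits a).sum ≡ a [ZMOD 3] := by
  simpa only [baseVal_negTwoDigits] using
    (baseVal_modEq_sum (b := -2) (m := 3) (by decide) (negTwoDigits a)).symm

theorem sum_negTwoDigits_nonneg (a : ℤ) : 0 ≤ (negTwoDigits a).sum :=
  List.sum_nonneg fun d hd => by rcases mem_negTwoDigits hd with rfl | rfl <;> norm_num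

theorem sum_negTwoDigits_le (a : ℤ) : (negTwoDigits a).sum ≤ max a (1 - a) := by
  induction a using negTwoDigits.induct with
  | case1 => simp [negTwoDigits_zero]
  | case2 a h ih =>
    rw [negTwoDigits_of_ne_zero h, List.sum_cons]
    rcases eq_or_ne (-(a / 2)) 0 with h0 | h0
    · rw [h0, negTwoDigits_zero, List.sum_nil]
      omega
    · omega

theorem sum_negTwoDigits_lt {a : ℤ} (ha : 4 ≤ a) : (negTwoDigits a).sum < a := by
  have := sum_negTwoDigits_le (-(a / 2))
  rw [negTwoDigits_of_ne_zero (by omega), List.sum_cons]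
  omega

theorem IsPowSumFun.eq_sum_negTwoDigits {e : ℕ} {S : ℤ → ℤ} (hS : IsPowSumFun e (-2) S)
    (he : e ≠ 0) (a : ℤ) : S a = (negTwoDigits a).sum := by
  rcases eq_or_ne a 0 with rfl | ha
  · rw [hS.1, negTwoDigits_zero, List.sum_nil]
  · rw [hS.2 a _ (isDigitExpansion_negTwoDigits ha),
      List.sum_map_pow_of_mem_zero_one he fun _ => mem_negTwoDigits]

theorem exists_iterate_eq_one_of_lt {S : ℤ → ℤ} {P : ℤ → Prop} (hP : ∀ a, P a → 0 < a)
    (hmaps : ∀ a, P a → P (S a)) (hlt : ∀ a, P a → a ≠ 1 → S a < a) (h1 : S 1 = 1)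
    (a : ℤ) (ha : P a) : ∃ k, 1 ≤ k ∧ S^[k] a = 1 := by
  induction h : a.toNat using Nat.strong_induction_on generalizing a with
  | _ n ih =>
    rcases eq_or_ne a 1 with rfl | ha1
    · exact ⟨1, le_rfl, h1⟩
    · have hdecr := hlt a ha ha1
      have hpos := hP _ (hmaps a ha)
      obtain ⟨k, -, hk⟩ := ih _ (by omega) (S a) (hmaps a ha) rfl
      exact ⟨k + 1, by omega, by rwa [Function.iterate_succ_apply]⟩

theorem infinite_progression_neg_two_happy (S : ℤ → ℤ) (hS : IsPowSumFun 2 (-2) S) :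
    (∃ m : ℤ, 0 < m ∧ ∀ j : ℕ, ∃ k : ℕ, 1 ≤ k ∧ S^[k] (m + 3 * j) = 1) ∧
      ∀ a : ℤ, 0 < a → a ≡ 1 [ZMOD 3] → ∃ k : ℕ, 1 ≤ k ∧ S^[k] a = 1 := by
  have hSa := hS.eq_sum_negTwoDigits two_ne_zero
  have happy (a : ℤ) (ha : 0 < a) (ha3 : a ≡ 1 [ZMOD 3]) : ∃ k, 1 ≤ k ∧ S^[k] a = 1 := by
    refine exists_iterate_eq_one_of_lt (P := fun a => 0 < a ∧ a ≡ 1 [ZMOD 3])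
      (fun _ => And.left) ?maps ?lt ?one a ⟨ha, ha3⟩
    case maps =>
      rintro b ⟨-, hb⟩
      have hmod := (sum_negTwoDigits_modEq b).trans hb
      have := sum_negTwoDigits_nonneg b
      rw [hSa]
      exact ⟨by unfold Int.ModEq at hmod; omega, hmod⟩
    case lt =>
      rintro b ⟨hb, hb3⟩ hb1
      rw [hSa]
      exact sum_negTwoDigits_lt (by unfold Int.ModEq at hb3; omega)
    case one =>
      rw [hSa, negTwoDigits_of_ne_zero one_ne_zero]
      norm_num [negTwoDigits_zero]
  refine ⟨⟨1, one_pos, fun j => happy _ (by positivity) ?_⟩, happy⟩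
  simp [Int.ModEq]
end
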